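/- arXiv:1002.3842 — 5 statements merged into one kernel-verified Lean document; each statement's English description precedes it below -/
import Mathlib

section
/- Let R be a commutative ring, t, r ∈ R units, and s ∈ R satisfying s² = (1 − t·r)·s, and let M be an R-module. Define B : M × M → M × M by B(x,y) = (t·y + s·x, r·x). Then B satisfies the set-theoretic Yang–Baxter equation: (B × Id) ∘ (Id × B) ∘ (B × Id) = (Id × B) ∘ (B × Id) ∘ (Id × B) as maps M × M × M → M × M × M. -/
/-- The (t,s,r)-birack map `B(x,y) = (t·y + s·x, r·x)` on an `R`-module `M`. -/
def tsrB {R M : Type*} [CommRing R] [AddCommGroup M] [Module R M]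
    (t r : Rˣ) (s : R) : M × M → M × M :=
  fun p => ((t : R) • p.2 + s • p.1, (r : R) • p.1)

/-- `B × Id`, acting on the first two coordinates of a triple. -/
def BxId {X : Type*} (B : X × X → X × X) : X × X × X → X × X × X :=
  fun p => ((B (p.1, p.2.1)).1, (B (p.1, p.2.1)).2, p.2.2)

/-- `Id × B`, acting on the last two coordinates of a triple. -/
def IdxB {X : Type*} (B : X × X → X × X) : X × X × X → X × X × X :=
  fun p => (p.1, B p.2)

/-- If `s² = (1 − t·r)·s`, the map `B(x,y) = (t·y + s·x, r·x)` satisfies the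
set-theoretic Yang–Baxter equation. -/
theorem tsrB_yangBaxter {R M : Type*} [CommRing R] [AddCommGroup M] [Module R M]
    (t r : Rˣ) (s : R) (hs : s ^ 2 = (1 - (t : R) * r) * s) :
    BxId (tsrB (M := M) t r s) ∘ IdxB (tsrB t r s) ∘ BxId (tsrB t r s) =
      IdxB (tsrB (M := M) t r s) ∘ BxId (tsrB t r s) ∘ IdxB (tsrB t r s) := by
  funext p
  obtain ⟨x, y, z⟩ := p
  simp only [Function.comp, BxId, IdxB, tsrB, Prod.mk.injEq]
  refine ⟨?_, ?_, ?_⟩ <;> first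
    | trivial
    | (match_scalars <;> first | ring1 | linear_combination hs)
end

section
/- Let R be a commutative ring, t, r ∈ R units, and s ∈ R satisfying s² = (1 − t·r)·s, and let M be an R-module. Define S : M × M → M × M by S(x,y) = (r·y, t⁻¹·x − t⁻¹·s·y), with inverse S⁻¹(x,y) = (t·y + s·r⁻¹·x, r⁻¹·x). Then the four diagonal maps M → M given by x ↦ S₁(x,x) = r·x, x ↦ S₂(x,x) = t⁻¹·(1 − s)·x, x ↦ S₁⁻¹(x,x) = (t + s·r⁻¹)·x, and x ↦ S₂⁻¹(x,x) = r⁻¹·x are all bijections of M. -/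
/-- The sideways map `S(x,y) = (r·y, t⁻¹·x − t⁻¹·s·y)`. -/
def tsrS {R M : Type*} [CommRing R] [AddCommGroup M] [Module R M]
    (t r : Rˣ) (s : R) : M × M → M × M :=
  fun p => ((r : R) • p.2, (↑t⁻¹ : R) • p.1 - ((↑t⁻¹ : R) * s) • p.2)

/-- The inverse sideways map `S⁻¹(x,y) = (t·y + s·r⁻¹·x, r⁻¹·x)`. -/
def tsrSinv {R M : Type*} [CommRing R] [AddCommGroup M] [Module R M]
    (t r : Rˣ) (s : R) : M × M → M × M :=
  fun p => ((t : R) • p.2 + (s * (↑r⁻¹ : R)) • p.1, (↑r⁻¹ : R) • p.1)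

/-- Scalar multiplication by an element with a (two-sided) multiplicative
inverse is bijective. -/
lemma smul_bijective_of_mul_eq_one {R M : Type*} [CommRing R] [AddCommGroup M] [Module R M]
    {a b : R} (hab : a * b = 1) : Function.Bijective (fun x : M => a • x) := by
  refine Function.bijective_iff_has_inverse.mpr ⟨fun x => b • x, ?_, ?_⟩ <;> intro x <;> simp
  · rw [smul_smul, mul_comm, hab, one_smul]
  · rw [smul_smul, hab, one_smul]

/-- The four diagonal maps `x ↦ S₁(x,x) = r·x`, `x ↦ S₂(x,x) = t⁻¹·(1−s)·x`,
`x ↦ S₁⁻¹(x,x) = (t + s·r⁻¹)·x`, `x ↦ S₂⁻¹(x,x) = r⁻¹·x` are bijections of `M`. -/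
theorem tsr_diagonal_bijective {R M : Type*} [CommRing R] [AddCommGroup M] [Module R M]
    (t r : Rˣ) (s : R) (hs : s ^ 2 = (1 - (t : R) * r) * s) :
    (∀ x : M, (tsrS t r s (x, x)).1 = (r : R) • x) ∧
      (∀ x : M, (tsrS t r s (x, x)).2 = ((↑t⁻¹ : R) * (1 - s)) • x) ∧
      (∀ x : M, (tsrSinv t r s (x, x)).1 = ((t : R) + s * (↑r⁻¹ : R)) • x) ∧
      (∀ x : M, (tsrSinv t r s (x, x)).2 = (↑r⁻¹ : R) • x) ∧
      Function.Bijective (fun x : M => (tsrS t r s (x, x)).1) ∧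
      Function.Bijective (fun x : M => (tsrS t r s (x, x)).2) ∧
      Function.Bijective (fun x : M => (tsrSinv t r s (x, x)).1) ∧
      Function.Bijective (fun x : M => (tsrSinv t r s (x, x)).2) := by
  have ht : (t : R) * (↑t⁻¹ : R) = 1 := t.mul_inv
  have hr : (r : R) * (↑r⁻¹ : R) = 1 := r.mul_inv
  have h1 : ∀ x : M, (tsrS t r s (x, x)).1 = (r : R) • x := fun x => rfl
  have h2 : ∀ x : M, (tsrS t r s (x, x)).2 = ((↑t⁻¹ : R) * (1 - s)) • x := by
    intro x
    simp only [tsrS, ← sub_smul]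
    ring_nf
  have h3 : ∀ x : M, (tsrSinv t r s (x, x)).1 = ((t : R) + s * (↑r⁻¹ : R)) • x := by
    intro x
    simp only [tsrSinv, ← add_smul]
  have h4 : ∀ x : M, (tsrSinv t r s (x, x)).2 = (↑r⁻¹ : R) • x := fun x => rfl
  -- the key algebraic identity: (t⁻¹(1-s)) * (t + s r⁻¹) = 1
  have key : ((↑t⁻¹ : R) * (1 - s)) * ((t : R) + s * (↑r⁻¹ : R)) = 1 := by
    linear_combination (-((↑t⁻¹ : R) * (↑r⁻¹ : R))) * hs + ht +
      ((↑t⁻¹ : R) * s * (t : R)) * hr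
  refine ⟨h1, h2, h3, h4, ?_, ?_, ?_, ?_⟩
  · simpa only [h1] using smul_bijective_of_mul_eq_one (M := M) hr
  · simpa only [h2] using smul_bijective_of_mul_eq_one (M := M) key
  · simpa only [h3] using smul_bijective_of_mul_eq_one (M := M) (by rw [mul_comm]; exact key)
  · simpa only [h4] using smul_bijective_of_mul_eq_one (M := M) (by rw [mul_comm]; exact hr)
end

section
/- Let R be a commutative ring, t, r ∈ R units, and s ∈ R satisfying s² = (1 − t·r)·s, and let M be an R-module. Define S : M × M → M × M by S(x,y) = (r·y, t⁻¹·x − t⁻¹·s·y). Then the kink map π : M → M given by π(x) = (t·r + s)·x is a bijection of M with inverse x ↦ t⁻¹·r⁻¹·(1 − s)·x, and it satisfies S(π(x), x) = (r·x, r·x) for all x ∈ M. -/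
/-- The kink map `π(x) = (t·r + s)·x` of the (t,s,r)-birack. -/
def tsrKink {R M : Type*} [CommRing R] [AddCommGroup M] [Module R M]
    (t r : Rˣ) (s : R) : M → M :=
  fun x => ((t : R) * r + s) • x

/-- The kink map `π(x) = (t·r + s)·x` is a bijection of `M` with inverse
`x ↦ t⁻¹·r⁻¹·(1 − s)·x`, and it satisfies `S(π(x), x) = (r·x, r·x)`. -/
theorem tsrKink_bijective {R M : Type*} [CommRing R] [AddCommGroup M] [Module R M]
    (t r : Rˣ) (s : R) (hs : s ^ 2 = (1 - (t : R) * r) * s) :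
    (∀ x : M, ((↑t⁻¹ : R) * (↑r⁻¹ : R) * (1 - s)) • tsrKink t r s x = x) ∧
      (∀ x : M, tsrKink t r s (((↑t⁻¹ : R) * (↑r⁻¹ : R) * (1 - s)) • x) = x) ∧
      Function.Bijective (tsrKink (M := M) t r s) ∧
      (∀ x : M, tsrS t r s (tsrKink t r s x, x) = ((r : R) • x, (r : R) • x)) := by
  have ht : (↑t⁻¹ : R) * t = 1 := t.inv_mul
  have hr : (↑r⁻¹ : R) * r = 1 := r.inv_mul
  have key : ((↑t⁻¹ : R) * (↑r⁻¹ : R) * (1 - s)) * ((t : R) * r + s) = 1 := by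
    linear_combination (-(↑t⁻¹ * ↑r⁻¹ : R)) * hs + ((↑r⁻¹ : R) * r) * ht + hr
  have h1 : ∀ x : M, ((↑t⁻¹ : R) * (↑r⁻¹ : R) * (1 - s)) • tsrKink t r s x = x := by
    intro x
    simp only [tsrKink, smul_smul, key, one_smul]
  have h2 : ∀ x : M, tsrKink t r s (((↑t⁻¹ : R) * (↑r⁻¹ : R) * (1 - s)) • x) = x := by
    intro x
    simp only [tsrKink, smul_smul]
    rw [mul_comm, key, one_smul]
  refine ⟨h1, h2, ⟨Function.LeftInverse.injective h1, Function.RightInverse.surjective h2⟩, ?_⟩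
  intro x
  simp only [tsrS, tsrKink, smul_smul, Prod.mk.injEq]
  constructor
  · trivial
  · rw [← sub_smul]
    congr 1
    linear_combination ((r : R)) * ht
end

section
/- Let G be a group, let τ and ρ be automorphisms of G, and let σ be an endomorphism of G such that ρ∘τ = τ∘ρ, ρ∘σ = σ∘ρ, and τ(σ(y))·σ(z) = τ(σ(ρ(z)))·σ(τ(y))·σ(σ(z)) for all y, z ∈ G. Define B : G × G → G × G by B(x,y) = (τ(y)·σ(x), ρ(x)). Then B satisfies the set-theoretic Yang–Baxter equation: (B × Id) ∘ (Id × B) ∘ (B × Id) = (Id × B) ∘ (B × Id) ∘ (Id × B) as maps G × G × G → G × G × G. -/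
/-- The (τ,σ,ρ)-birack map `B(x,y) = (τ(y)·σ(x), ρ(x))` on a group `G`. -/
def tsrGroupB {G : Type*} [Group G] (τ ρ : G ≃* G) (σ : G →* G) :
    G × G → G × G :=
  fun p => (τ p.2 * σ p.1, ρ p.1)

/-- If `ρ` commutes with `τ` and `σ`, and
`τ(σ(y))·σ(z) = τ(σ(ρ(z)))·σ(τ(y))·σ(σ(z))` for all `y, z ∈ G`, then
`B(x,y) = (τ(y)·σ(x), ρ(x))` satisfies the set-theoretic Yang–Baxter equation. -/
theorem tsrGroupB_yangBaxter {G : Type*} [Group G] (τ ρ : G ≃* G) (σ : G →* G)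
    (hρτ : ∀ x : G, ρ (τ x) = τ (ρ x))
    (hρσ : ∀ x : G, ρ (σ x) = σ (ρ x))
    (h : ∀ y z : G, τ (σ y) * σ z = τ (σ (ρ z)) * σ (τ y) * σ (σ z)) :
    BxId (tsrGroupB τ ρ σ) ∘ IdxB (tsrGroupB τ ρ σ) ∘ BxId (tsrGroupB τ ρ σ) =
      IdxB (tsrGroupB τ ρ σ) ∘ BxId (tsrGroupB τ ρ σ) ∘ IdxB (tsrGroupB τ ρ σ) := by
  funext ⟨x, y, z⟩
  simp only [Function.comp_apply, BxId, IdxB, tsrGroupB, map_mul, Prod.mk.injEq]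
  refine ⟨?_, ?_, trivial⟩
  · rw [mul_assoc, mul_assoc, ← mul_assoc (τ (σ (ρ x))), ← h y x]
  · rw [hρτ, hρσ]
end

section
/- Let X and X' be finite sets equipped with maps B : X × X → X × X and B' : X' × X' → X' × X' (with component maps B = (B₁, B₂) and B' = (B'₁, B'₂)), and suppose ψ : X → X' is a bijection satisfying ψ(B₁(x,y)) = B'₁(ψ(x), ψ(y)) and ψ(B₂(x,y)) = B'₂(ψ(x), ψ(y)) for all x, y ∈ X. Then for every x ∈ X one has c₁(ψ(x)) = c₁(x), c₂(ψ(x)) = c₂(x), r₁(ψ(x)) = r₁(x), and r₂(ψ(x)) = r₂(x), and consequently the polynomials coincide: Σ_{x∈X} s₁^{c₁(x)} s₂^{c₂(x)} t₁^{r₁(x)} t₂^{r₂(x)} = Σ_{x'∈X'} s₁^{c₁(x')} s₂^{c₂(x')} t₁^{r₁(x')} t₂^{r₂(x')} as polynomials in the four variables s₁, s₂, t₁, t₂ over the integers. -/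
/-- `c₁(x) = |{y ∈ X : B₁(y,x) = y}|`. -/
def birackC1 {X : Type*} [Fintype X] [DecidableEq X] (B : X × X → X × X) (x : X) : ℕ :=
  Fintype.card {y : X // (B (y, x)).1 = y}

/-- `c₂(x) = |{y ∈ X : B₂(x,y) = y}|`. -/
def birackC2 {X : Type*} [Fintype X] [DecidableEq X] (B : X × X → X × X) (x : X) : ℕ :=
  Fintype.card {y : X // (B (x, y)).2 = y}

/-- `r₁(x) = |{y ∈ X : B₁(y,x) = x}|`. -/
def birackR1 {X : Type*} [Fintype X] [DecidableEq X] (B : X × X → X × X) (x : X) : ℕ :=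
  Fintype.card {y : X // (B (y, x)).1 = x}

/-- `r₂(x) = |{y ∈ X : B₂(x,y) = x}|`. -/
def birackR2 {X : Type*} [Fintype X] [DecidableEq X] (B : X × X → X × X) (x : X) : ℕ :=
  Fintype.card {y : X // (B (x, y)).2 = x}

/-- The birack polynomial `ρ_{(X,B)} = Σ_{x∈X} s₁^{c₁(x)} s₂^{c₂(x)} t₁^{r₁(x)} t₂^{r₂(x)}`,
an integer polynomial in the four variables `s₁ = X 0`, `s₂ = X 1`, `t₁ = X 2`, `t₂ = X 3`. -/
noncomputable def birackPolynomial {X : Type*} [Fintype X] [DecidableEq X]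
    (B : X × X → X × X) : MvPolynomial (Fin 4) ℤ :=
  ∑ x : X,
    (MvPolynomial.X 0 : MvPolynomial (Fin 4) ℤ) ^ birackC1 B x *
      (MvPolynomial.X 1) ^ birackC2 B x * (MvPolynomial.X 2) ^ birackR1 B x *
      (MvPolynomial.X 3) ^ birackR2 B x

/-- If `ψ : X → X'` is a bijection intertwining the component maps of `B` and `B'`
(i.e. a birack isomorphism), then `ψ` preserves `c₁, c₂, r₁, r₂`, and consequently
the birack polynomials of `(X,B)` and `(X',B')` coincide. -/
theorem birackPolynomial_invariant {X X' : Type*} [Fintype X] [DecidableEq X]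
    [Fintype X'] [DecidableEq X'] (B : X × X → X × X) (B' : X' × X' → X' × X')
    (ψ : X → X') (hψ : Function.Bijective ψ)
    (h1 : ∀ x y : X, ψ ((B (x, y)).1) = (B' (ψ x, ψ y)).1)
    (h2 : ∀ x y : X, ψ ((B (x, y)).2) = (B' (ψ x, ψ y)).2) :
    (∀ x : X,
        birackC1 B' (ψ x) = birackC1 B x ∧ birackC2 B' (ψ x) = birackC2 B x ∧
          birackR1 B' (ψ x) = birackR1 B x ∧ birackR2 B' (ψ x) = birackR2 B x) ∧
      birackPolynomial B = birackPolynomial B' := by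

  set e := Equiv.ofBijective ψ hψ with he
  have key : ∀ x : X,
      birackC1 B' (ψ x) = birackC1 B x ∧ birackC2 B' (ψ x) = birackC2 B x ∧
        birackR1 B' (ψ x) = birackR1 B x ∧ birackR2 B' (ψ x) = birackR2 B x := by
    intro x
    refine ⟨?_, ?_, ?_, ?_⟩
    · exact (Fintype.card_congr (e.subtypeEquiv fun y => by
        simp only [he, Equiv.ofBijective_apply]
        constructor
        · intro h; rw [← h1]; exact congrArg ψ h
        · intro h; exact hψ.1 (by rw [h1]; exact h))).symm
    · exact (Fintype.card_congr (e.subtypeEquiv fun y => by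
        simp only [he, Equiv.ofBijective_apply]
        constructor
        · intro h; rw [← h2]; exact congrArg ψ h
        · intro h; exact hψ.1 (by rw [h2]; exact h))).symm
    · exact (Fintype.card_congr (e.subtypeEquiv fun y => by
        simp only [he, Equiv.ofBijective_apply]
        constructor
        · intro h; rw [← h1]; exact congrArg ψ h
        · intro h; exact hψ.1 (by rw [h1]; exact h))).symm
    · exact (Fintype.card_congr (e.subtypeEquiv fun y => by
        simp only [he, Equiv.ofBijective_apply]
        constructor
        · intro h; rw [← h2]; exact congrArg ψ h
        · intro h; exact hψ.1 (by rw [h2]; exact h))).symm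
  refine ⟨key, ?_⟩
  unfold birackPolynomial
  refine Fintype.sum_equiv e _ _ fun x => ?_
  obtain ⟨k1, k2, k3, k4⟩ := key x
  simp only [he, Equiv.ofBijective_apply] at *
  rw [k1, k2, k3, k4]
end
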